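/- Let 𝕂 be an algebraically closed field of characteristic p > 2 with p ∤ r, and let (α, j) ∈ Spec_p(D_{r,n}), i.e. a weight occurring in some irreducible completely splittable integral D_{r,n}-module. Suppose α_i = α_k for some 1 ≤ i < k ≤ n with j_i = j_k. Then {α_i + 1, α_i − 1} ⊆ {α_{i_1},…,α_{i_s}}, where i+1 ≤ i_1,…,i_s ≤ k−1 are all the indices with j_{i_1} = ⋯ = j_{i_s} = j_i = j_k. -/

import Mathlib

open scoped BigOperators

namespace DegYH

variable (K : Type) [Field K]

inductive DGen (n : ℕ) : Type
  | t : Fin n → DGen n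
  | f : Fin (n - 1) → DGen n
  | x : Fin n → DGen n

abbrev DFA (n : ℕ) : Type := FreeAlgebra K (DGen n)

noncomputable def dt {n : ℕ} (j : Fin n) : DFA K n := FreeAlgebra.ι K (DGen.t j)
noncomputable def df {n : ℕ} (i : Fin (n - 1)) : DFA K n := FreeAlgebra.ι K (DGen.f i)
noncomputable def dx {n : ℕ} (j : Fin n) : DFA K n := FreeAlgebra.ι K (DGen.x j)

def loFin {n : ℕ} (i : Fin (n - 1)) : Fin n := ⟨i.1, by have := i.2; omega⟩
def hiFin {n : ℕ} (i : Fin (n - 1)) : Fin n := ⟨i.1 + 1, by have := i.2; omega⟩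

/-- The simple transposition `s_i` acting on indices. -/
def sAct {n : ℕ} (i : Fin (n - 1)) (j : Fin n) : Fin n :=
  if j.1 = i.1 then hiFin i else if j.1 = i.1 + 1 then loFin i else j

/-- `e_i = (1/r) ∑_{s=0}^{r-1} t_i^s t_{i+1}^{-s}` (with `t^{-s}` written
`t^{(r-s) % r}`, using `t^r = 1` in the quotient). -/
noncomputable def de (r : ℕ) {n : ℕ} (i : Fin (n - 1)) : DFA K n :=
  (r : K)⁻¹ • ∑ s ∈ Finset.range r, dt K (loFin i) ^ s * dt K (hiFin i) ^ ((r - s) % r)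

/-- The defining relations of the degenerate affine Yokonuma–Hecke algebra `D_{r,n}`. -/
inductive DRel (r n : ℕ) : DFA K n → DFA K n → Prop
  | ff {i j : Fin (n - 1)} (h : i.1 + 2 ≤ j.1 ∨ j.1 + 2 ≤ i.1) :
      DRel r n (df K i * df K j) (df K j * df K i)
  | braid {i j : Fin (n - 1)} (h : j.1 = i.1 + 1) :
      DRel r n (df K i * df K j * df K i) (df K j * df K i * df K j)
  | tt (i j : Fin n) : DRel r n (dt K i * dt K j) (dt K j * dt K i)
  | ft (i : Fin (n - 1)) (j : Fin n) :
      DRel r n (df K i * dt K j) (dt K (sAct i j) * df K i)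
  | tpow (i : Fin n) : DRel r n (dt K i ^ r) 1
  | fsq (i : Fin (n - 1)) : DRel r n (df K i ^ 2) 1
  | xx (i j : Fin n) : DRel r n (dx K i * dx K j) (dx K j * dx K i)
  | fx (i : Fin (n - 1)) :
      DRel r n (df K i * dx K (hiFin i)) (dx K (loFin i) * df K i + de K r i)
  | fx' (i : Fin (n - 1)) (j : Fin n) (h : j ≠ loFin i ∧ j ≠ hiFin i) :
      DRel r n (df K i * dx K j) (dx K j * df K i)
  | tx (i j : Fin n) : DRel r n (dt K j * dx K i) (dx K i * dt K j)

/-- The degenerate affine Yokonuma–Hecke algebra `D_{r,n}` over `K`. -/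
abbrev DYH (r n : ℕ) : Type := RingQuot (DRel K r n)

noncomputable def dπ (r n : ℕ) : DFA K n →ₐ[K] DYH K r n :=
  RingQuot.mkAlgHom K (DRel K r n)

noncomputable def tD (r n : ℕ) (j : Fin n) : DYH K r n := dπ K r n (dt K j)
noncomputable def fD (r n : ℕ) (i : Fin (n - 1)) : DYH K r n := dπ K r n (df K i)
noncomputable def xD (r n : ℕ) (j : Fin n) : DYH K r n := dπ K r n (dx K j)

/-! ### Representations -/

/-- Simplicity (irreducibility) of a representation. -/
def SimpleRepK {A M : Type} [Semiring A] [Algebra K A] [AddCommGroup M] [Module K M]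
    (ρ : A →ₐ[K] Module.End K M) : Prop :=
  (∃ v : M, v ≠ 0) ∧
    ∀ W : Submodule K M, (∀ a : A, ∀ w ∈ W, ρ a w ∈ W) → W = ⊥ ∨ W = ⊤

variable {M : Type} [AddCommGroup M] [Module K M]

/-- An integral representation: all eigenvalues of the `x_i` lie in `I = ℤ·1 ⊆ K`. -/
def IntegralRep (r n : ℕ) (ρ : DYH K r n →ₐ[K] Module.End K M) : Prop :=
  ∀ (a : Fin n) (c : K), (∃ w : M, w ≠ 0 ∧ ρ (xD K r n a) w = c • w) → ∃ m : ℤ, c = (m : K)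

/-- A completely splittable representation: the `x_i` act semisimply. -/
def SplittableRep (r n : ℕ) (ρ : DYH K r n →ₐ[K] Module.End K M) : Prop :=
  ∀ a : Fin n, (ρ (xD K r n a)).IsSemisimple

/-- Membership in the generalized weight space `M_{(α,j)}`. -/
def InGenWtD (r n : ℕ) (ρ : DYH K r n →ₐ[K] Module.End K M) (ζ : K)
    (α : Fin n → K) (j : Fin n → Fin r) (w : M) : Prop :=
  ∀ a : Fin n,
    (∃ N : ℕ, ((ρ (xD K r n a) - α a • (1 : Module.End K M)) ^ N) w = 0) ∧
    ρ (tD K r n a) w = ζ ^ (j a : ℕ) • w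

/-- `w` is a weight vector of weight `(α, j)`: a simultaneous eigenvector with
`x_i`-eigenvalue `α_i` and `t_i`-eigenvalue `ζ_{j_i} = ζ^{j_i - 1}`. -/
def InWtD (r n : ℕ) (ρ : DYH K r n →ₐ[K] Module.End K M) (ζ : K)
    (α : Fin n → K) (j : Fin n → Fin r) (w : M) : Prop :=
  ∀ a : Fin n, ρ (xD K r n a) w = α a • w ∧ ρ (tD K r n a) w = ζ ^ (j a : ℕ) • w

/-- The weight `(s_iα, s_ij)` (or `(s_iα, j)` etc.) obtained by exchanging the
entries at places `i`, `i+1`. -/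
def swapWt {n : ℕ} {β : Type} (i : Fin (n - 1)) (α : Fin n → β) : Fin n → β :=
  α ∘ Equiv.swap (loFin i) (hiFin i)

end DegYH

/-!
Let `w` be a weight vector of weight `(α, j)`. If `j_b ≠ j_{b+1}`, then `f_b w` has the swapped
weight. If `j_b = j_{b+1}` and `α_b ≠ α_{b+1}`, so does `f_b w + (α_b - α_{b+1})⁻¹ w`, the image of
`w` under the intertwiner `f_b + e_b (x_b - x_{b+1})⁻¹`, and it is nonzero unless
`α_{b+1} - α_b = ±1`. As `x_b` acts semisimply, no weight has adjacent entries with equal `α` and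
equal `j`; with the braid relation and `2 ≠ 0`, no weight has three adjacent entries `a, a', a`
with equal `j` either.

Fix `s = ±1` and induct on `k - i`, assuming that `α_i + s` does not occur between `i` and `k`.
Then neither does `α_i` (use the closer pair). If the entry at `i + 1` could be swapped with the
one at `i`, the induction hypothesis for the swapped weight would produce `α_i + s`; hence that
entry is `α_i - s` with the same `j`, and so is the entry at `k - 1`. These two positions either
coincide, giving a forbidden pattern `a, a - s, a`, or form a closer pair of equal entries,
between which the induction hypothesis produces a copy of `α_i`.
-/

theorem IsPrimitiveRoot.sum_pow_mul_pow_sub_mod {K : Type} [Field K] {r : ℕ} {ζ : K}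
    (hζ : IsPrimitiveRoot ζ r) (a c : Fin r) :
    ∑ s ∈ Finset.range r, (ζ ^ (a : ℕ)) ^ s * (ζ ^ (c : ℕ)) ^ ((r - s) % r) =
      if a = c then (r : K) else 0 := by
  have hpow : ∀ b : ℕ, (ζ ^ b) ^ r = 1 := fun b => by
    rw [← pow_mul, mul_comm, pow_mul, hζ.pow_eq_one, one_pow]
  have hζ₀ : ζ ^ (c : ℕ) ≠ 0 := pow_ne_zero _ (hζ.ne_zero (Fin.pos a).ne')
  set u := ζ ^ (a : ℕ) * (ζ ^ (c : ℕ))⁻¹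
  have hterm : ∀ s ∈ Finset.range r, (ζ ^ (a : ℕ)) ^ s * (ζ ^ (c : ℕ)) ^ ((r - s) % r) = u ^ s := by
    intro s hs
    rw [← pow_eq_pow_mod _ (hpow c), mul_pow, inv_pow, eq_inv_of_mul_eq_one_left (a := _ ^ (r - s))]
    rw [← pow_add, Nat.sub_add_cancel (Finset.mem_range.mp hs).le, hpow]
  rw [Finset.sum_congr rfl hterm]
  split_ifs with hac
  · simp [u, hac, hζ₀]
  · have hu : u ≠ 1 := fun hu => hac <| Fin.ext <|
      hζ.pow_inj a.2 c.2 (by simpa [u, mul_inv_eq_one₀ hζ₀] using hu)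
    rw [geom_sum_eq hu, mul_pow, inv_pow, hpow, hpow, inv_one, mul_one, sub_self, zero_div]

theorem Module.End.IsSemisimple.eq_zero_of_apply_eq_smul_add {K M : Type} [Field K]
    [AddCommGroup M] [Module K M] {g : Module.End K M} (hg : g.IsSemisimple) {μ : K} {v u : M}
    (hv : g v = μ • v + u) (hu : g u = μ • u) : u = 0 := by
  have hv₂ : v ∈ g.genEigenspace μ (2 : ℕ) := by
    rw [Module.End.mem_genEigenspace_nat, LinearMap.mem_ker, sq, Module.End.mul_apply]
    simp [hv, hu]
  rw [hg.isFinitelySemisimple.genEigenspace_eq_eigenspace μ (by norm_num),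
    Module.End.mem_eigenspace_iff, hv] at hv₂
  simpa using hv₂

theorem sq_eq_one_of_mul_self_eq_one_of_apply_eq_smul {K M : Type} [Field K] [AddCommGroup M]
    [Module K M] {g : Module.End K M} (hg : g * g = 1) {μ : K} {w : M} (hw₀ : w ≠ 0)
    (hw : g w = μ • w) : μ ^ 2 = 1 := by
  have h : (μ ^ 2) • w = (1 : K) • w := by
    rw [one_smul, sq, ← smul_smul, ← hw, ← map_smul, ← hw, ← Module.End.mul_apply, hg,
      Module.End.one_apply]
  exact smul_left_injective K hw₀ h

theorem ne_add_one_of_ne_add_of_ne_sub {K : Type} [Ring K] {s x a : K} (hs : s = 1 ∨ s = -1)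
    (h₁ : x ≠ a + s) (h₂ : x ≠ a - s) : x ≠ a + 1 ∧ a ≠ x + 1 := by
  rcases hs with rfl | rfl
  · exact ⟨h₁, fun h => h₂ (by rw [h, add_sub_cancel_right])⟩
  · exact ⟨fun h => h₂ (by rw [h, sub_neg_eq_add]), fun h => h₁ (by rw [h, add_neg_cancel_right])⟩

namespace DegYH

variable {K : Type} [Field K] {r n : ℕ}

@[simp]
theorem val_loFin (b : Fin (n - 1)) : (loFin b : ℕ) = b := rfl

@[simp]
theorem val_hiFin (b : Fin (n - 1)) : (hiFin b : ℕ) = b + 1 := rfl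

theorem loFin_lt_hiFin (b : Fin (n - 1)) : loFin b < hiFin b :=
  Fin.lt_def.mpr (Nat.lt_succ_self _)

theorem forall_of_loFin_of_hiFin {P : Fin n → Prop} (b : Fin (n - 1)) (hlo : P (loFin b))
    (hhi : P (hiFin b)) (hne : ∀ a, a ≠ loFin b → a ≠ hiFin b → P a) : ∀ a, P a := by
  intro a
  by_cases h₁ : a = loFin b
  · exact h₁ ▸ hlo
  by_cases h₂ : a = hiFin b
  · exact h₂ ▸ hhi
  exact hne a h₁ h₂

theorem sAct_eq_swap (b : Fin (n - 1)) (a : Fin n) :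
    sAct b a = Equiv.swap (loFin b) (hiFin b) a := by
  unfold sAct
  split_ifs with h₁ h₂
  · rw [show a = loFin b from Fin.ext h₁, Equiv.swap_apply_left]
  · rw [show a = hiFin b from Fin.ext h₂, Equiv.swap_apply_right]
  · exact (Equiv.swap_apply_of_ne_of_ne (fun h => h₁ (congrArg Fin.val h))
      (fun h => h₂ (congrArg Fin.val h))).symm

section SwapWt

variable {β : Type} (b : Fin (n - 1)) (f : Fin n → β)

@[simp]
theorem swapWt_loFin : swapWt b f (loFin b) = f (hiFin b) := by
  simp [swapWt]

@[simp]
theorem swapWt_hiFin : swapWt b f (hiFin b) = f (loFin b) := by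
  simp [swapWt]

theorem swapWt_of_ne {a : Fin n} (h₁ : a ≠ loFin b) (h₂ : a ≠ hiFin b) : swapWt b f a = f a := by
  simp [swapWt, Equiv.swap_apply_of_ne_of_ne h₁ h₂]

theorem swapWt_of_eq (h : f (loFin b) = f (hiFin b)) : swapWt b f = f :=
  funext <| forall_of_loFin_of_hiFin b (by rw [swapWt_loFin, h]) (by rw [swapWt_hiFin, h])
    fun _ h₁ h₂ => swapWt_of_ne b f h₁ h₂

end SwapWt

section Relations

theorem dπ_eq_of_rel {a a' : DFA K n} (h : DRel K r n a a') : dπ K r n a = dπ K r n a' :=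
  RingQuot.mkAlgHom_rel K h

theorem fD_mul_self (b : Fin (n - 1)) : fD K r n b * fD K r n b = 1 := by
  simpa [fD, sq] using dπ_eq_of_rel (DRel.fsq (K := K) (r := r) b)

theorem fD_mul_xD_hiFin (b : Fin (n - 1)) :
    fD K r n b * xD K r n (hiFin b) = xD K r n (loFin b) * fD K r n b + dπ K r n (de K r b) := by
  simpa [fD, xD] using dπ_eq_of_rel (DRel.fx (K := K) (r := r) b)

theorem fD_mul_xD_of_ne (b : Fin (n - 1)) {a : Fin n} (h₁ : a ≠ loFin b) (h₂ : a ≠ hiFin b) :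
    fD K r n b * xD K r n a = xD K r n a * fD K r n b := by
  simpa [fD, xD] using dπ_eq_of_rel (DRel.fx' (K := K) (r := r) b a ⟨h₁, h₂⟩)

theorem fD_mul_tD (b : Fin (n - 1)) (a : Fin n) :
    fD K r n b * tD K r n a = tD K r n (sAct b a) * fD K r n b := by
  simpa [fD, tD] using dπ_eq_of_rel (DRel.ft (K := K) (r := r) b a)

theorem fD_braid {b c : Fin (n - 1)} (h : c.1 = b.1 + 1) :
    fD K r n b * fD K r n c * fD K r n b = fD K r n c * fD K r n b * fD K r n c := by
  simpa [fD] using dπ_eq_of_rel (DRel.braid (K := K) (r := r) h)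

end Relations

variable {M : Type} [AddCommGroup M] [Module K M]

section WeightVectors

variable (ρ : DYH K r n →ₐ[K] Module.End K M) {ζ : K}

theorem fD_fD_apply (b : Fin (n - 1)) (v : M) : ρ (fD K r n b) (ρ (fD K r n b) v) = v := by
  rw [← Module.End.mul_apply, ← map_mul, fD_mul_self, map_one, Module.End.one_apply]

theorem de_apply (hζ : IsPrimitiveRoot ζ r) (hr : (r : K) ≠ 0) (b : Fin (n - 1)) {v : M}
    {a c : Fin r} (hlo : ρ (tD K r n (loFin b)) v = ζ ^ (a : ℕ) • v)
    (hhi : ρ (tD K r n (hiFin b)) v = ζ ^ (c : ℕ) • v) :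
    ρ (dπ K r n (de K r b)) v = if a = c then v else 0 := by
  have hpow : ∀ (x : Fin n) (μ : K), ρ (tD K r n x) v = μ • v →
      ∀ m : ℕ, (ρ (tD K r n x) ^ m) v = μ ^ m • v := fun x μ h m => by
    induction m with
    | zero => simp
    | succ m ih => rw [pow_succ, Module.End.mul_apply, h, map_smul, ih, smul_smul, ← pow_succ']
  have hsum : (∑ s ∈ Finset.range r,
      ρ (tD K r n (loFin b)) ^ s * ρ (tD K r n (hiFin b)) ^ ((r - s) % r)) v =
      (∑ s ∈ Finset.range r, (ζ ^ (a : ℕ)) ^ s * (ζ ^ (c : ℕ)) ^ ((r - s) % r)) • v := by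
    rw [LinearMap.sum_apply, Finset.sum_smul]
    refine Finset.sum_congr rfl fun s _ => ?_
    rw [Module.End.mul_apply, hpow _ _ hhi, map_smul, hpow _ _ hlo, smul_smul, mul_comm]
  have hde : dπ K r n (de K r b) = (r : K)⁻¹ • ∑ s ∈ Finset.range r,
      tD K r n (loFin b) ^ s * tD K r n (hiFin b) ^ ((r - s) % r) := by
    simp [de, tD]
  simp only [hde, map_smul, map_sum, map_mul, map_pow, LinearMap.smul_apply, hsum,
    hζ.sum_pow_mul_pow_sub_mod, smul_smul]
  split_ifs <;> simp [hr]

namespace InWtD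

variable {ρ} {α : Fin n → K} {j : Fin n → Fin r} {w : M} (hw : InWtD K r n ρ ζ α j w)
include hw

theorem tD_fD_apply (b : Fin (n - 1)) (a : Fin n) :
    ρ (tD K r n a) (ρ (fD K r n b) w) = ζ ^ ((swapWt b j a : Fin r) : ℕ) • ρ (fD K r n b) w := by
  have h := congrArg (fun g => ρ g w) (fD_mul_tD (K := K) (r := r) b (sAct b a))
  simp only [map_mul, Module.End.mul_apply, sAct_eq_swap, Equiv.swap_apply_self] at h
  rw [← h, (hw _).2, map_smul, swapWt, Function.comp_apply]

theorem xD_fD_apply_of_ne (b : Fin (n - 1)) {a : Fin n} (h₁ : a ≠ loFin b) (h₂ : a ≠ hiFin b) :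
    ρ (xD K r n a) (ρ (fD K r n b) w) = α a • ρ (fD K r n b) w := by
  rw [← Module.End.mul_apply, ← map_mul, ← fD_mul_xD_of_ne b h₁ h₂, map_mul, Module.End.mul_apply,
    (hw a).1, map_smul]

variable (hζ : IsPrimitiveRoot ζ r) (hr : (r : K) ≠ 0) (b : Fin (n - 1))
include hζ hr

theorem xD_loFin_fD_apply :
    ρ (xD K r n (loFin b)) (ρ (fD K r n b) w) =
      α (hiFin b) • ρ (fD K r n b) w - if j (loFin b) = j (hiFin b) then w else 0 := by
  have h := congrArg (fun g => ρ g w) (fD_mul_xD_hiFin (K := K) (r := r) b)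
  simp only [map_mul, map_add, Module.End.mul_apply, LinearMap.add_apply, (hw _).1, map_smul,
    de_apply ρ hζ hr b (hw _).2 (hw _).2] at h
  exact eq_sub_of_add_eq h.symm

theorem xD_hiFin_fD_apply :
    ρ (xD K r n (hiFin b)) (ρ (fD K r n b) w) =
      α (loFin b) • ρ (fD K r n b) w + if j (loFin b) = j (hiFin b) then w else 0 := by
  have h := congrArg (fun g => ρ g (ρ (fD K r n b) w)) (fD_mul_xD_hiFin (K := K) (r := r) b)
  have he := de_apply ρ hζ hr b (hw.tD_fD_apply b (loFin b)) (hw.tD_fD_apply b (hiFin b))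
  simp only [map_mul, map_add, Module.End.mul_apply, LinearMap.add_apply, fD_fD_apply, (hw _).1,
    swapWt_loFin, swapWt_hiFin, he, eq_comm (a := j (hiFin b))] at h
  rw [← fD_fD_apply ρ b (ρ (xD K r n (hiFin b)) _), h, map_add, map_smul,
    apply_ite (ρ (fD K r n b)), fD_fD_apply, map_zero]

theorem fD_of_ne (hj : j (loFin b) ≠ j (hiFin b)) :
    InWtD K r n ρ ζ (swapWt b α) (swapWt b j) (ρ (fD K r n b) w) := by
  refine fun a => ⟨?_, hw.tD_fD_apply b a⟩
  revert a
  refine forall_of_loFin_of_hiFin b ?_ ?_ fun a h₁ h₂ => ?_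
  · simp [hw.xD_loFin_fD_apply hζ hr, hj]
  · simp [hw.xD_hiFin_fD_apply hζ hr, hj]
  · rw [swapWt_of_ne b α h₁ h₂, hw.xD_fD_apply_of_ne b h₁ h₂]

theorem intertwiner (hj : j (loFin b) = j (hiFin b)) (hα : α (loFin b) ≠ α (hiFin b)) :
    InWtD K r n ρ ζ (swapWt b α) j (ρ (fD K r n b) w + (α (loFin b) - α (hiFin b))⁻¹ • w) := by
  have hinv : (α (loFin b) - α (hiFin b))⁻¹ * (α (loFin b) - α (hiFin b)) = 1 :=
    inv_mul_cancel₀ (sub_ne_zero.mpr hα)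
  refine fun a => ⟨?_, ?_⟩
  · revert a
    refine forall_of_loFin_of_hiFin b ?_ ?_ fun a h₁ h₂ => ?_
    · rw [map_add, map_smul, hw.xD_loFin_fD_apply hζ hr, if_pos hj, (hw _).1, swapWt_loFin]
      match_scalars
      · ring
      · linear_combination hinv
    · rw [map_add, map_smul, hw.xD_hiFin_fD_apply hζ hr, if_pos hj, (hw _).1, swapWt_hiFin]
      match_scalars
      · ring
      · linear_combination -hinv
    · rw [map_add, map_smul, hw.xD_fD_apply_of_ne b h₁ h₂, (hw a).1, swapWt_of_ne b α h₁ h₂,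
        smul_add, smul_comm]
  · rw [map_add, map_smul, hw.tD_fD_apply b a, (hw a).2, swapWt_of_eq b j hj, smul_add, smul_comm]

theorem eq_zero_of_adjacent (hss : (ρ (xD K r n (loFin b))).IsSemisimple)
    (hj : j (loFin b) = j (hiFin b)) (hα : α (loFin b) = α (hiFin b)) : w = 0 :=
  neg_eq_zero.mp <| hss.eq_zero_of_apply_eq_smul_add (μ := α (loFin b)) (v := ρ (fD K r n b) w)
    (by rw [hw.xD_loFin_fD_apply hζ hr b, if_pos hj, ← hα, sub_eq_add_neg])
    (by rw [map_neg, (hw _).1, smul_neg])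

theorem eq_zero_of_aba (hsplit : SplittableRep K r n ρ) (h2 : (2 : K) ≠ 0) {c : Fin (n - 1)}
    (hbc : c.1 = b.1 + 1) (hj₁ : j (loFin b) = j (hiFin b)) (hj₂ : j (hiFin b) = j (hiFin c))
    (hα : α (loFin b) = α (hiFin c)) : w = 0 := by
  have hcb : loFin c = hiFin b := Fin.ext hbc
  have hc₁ : hiFin c ≠ loFin b := Fin.ne_of_val_ne (by simp only [val_loFin, val_hiFin]; omega)
  have hc₂ : hiFin c ≠ hiFin b := Fin.ne_of_val_ne (by simp only [val_hiFin]; omega)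
  have hb₁ : loFin b ≠ loFin c := Fin.ne_of_val_ne (by simp only [val_loFin]; omega)
  by_cases hαb : α (loFin b) = α (hiFin b)
  · exact hw.eq_zero_of_adjacent hζ hr b (hsplit _) hj₁ hαb
  -- Both intertwiners vanish, their weights having adjacent equal entries, so `f_b` and `f_c`
  -- act on `w` by `μ` and `-μ`, and the braid relation becomes `-μ³ w = μ³ w`.
  set μ := (α (hiFin b) - α (loFin b))⁻¹
  have hμ : μ ≠ 0 := inv_ne_zero (sub_ne_zero.mpr (Ne.symm hαb))
  have hfb : ρ (fD K r n b) w = μ • w := by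
    have h0 := (hw.intertwiner hζ hr b hj₁ hαb).eq_zero_of_adjacent hζ hr c (hsplit _)
      (by rw [hcb, hj₂]) (by rw [hcb, swapWt_hiFin, swapWt_of_ne b α hc₁ hc₂, hα])
    rwa [add_eq_zero_iff_eq_neg, ← neg_smul, ← inv_neg, neg_sub] at h0
  have hfc : ρ (fD K r n c) w = -μ • w := by
    have h0 := (hw.intertwiner hζ hr c (by rw [hcb, ← hj₂]) (by rw [hcb, ← hα]; exact Ne.symm hαb)
      ).eq_zero_of_adjacent hζ hr b (hsplit _) hj₁
      (by rw [swapWt_of_ne c α hb₁ hc₁.symm, ← hcb, swapWt_loFin, hα])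
    rwa [add_eq_zero_iff_eq_neg, ← neg_smul, hcb, ← hα] at h0
  have hbraid := congrArg (fun g => ρ g w) (fD_braid (K := K) (r := r) hbc)
  simp only [map_mul, Module.End.mul_apply, hfb, hfc, map_smul, smul_smul] at hbraid
  have h0 : (2 * μ ^ 3) • w = 0 := by
    rw [show 2 * μ ^ 3 = -μ * (μ * -μ) - μ * (-μ * μ) by ring, sub_smul, hbraid, sub_self]
  exact (smul_eq_zero.mp h0).resolve_left (mul_ne_zero h2 (pow_ne_zero 3 hμ))

end InWtD

end WeightVectors

section Weights

variable (ρ : DYH K r n →ₐ[K] Module.End K M) (ζ : K)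

def IsWeight (α : Fin n → K) (j : Fin n → Fin r) : Prop :=
  ∃ w : M, w ≠ 0 ∧ InWtD K r n ρ ζ α j w

def OccursBetween (s : K) (i k : Fin n) : Prop :=
  ∀ α j, IsWeight ρ ζ α j → j i = j k → α i = α k →
    ∃ m, i < m ∧ m < k ∧ j m = j i ∧ α m = α i + s

variable {ρ ζ} {s : K}

namespace IsWeight

variable {α : Fin n → K} {j : Fin n → Fin r} (hw : IsWeight ρ ζ α j)
  (hζ : IsPrimitiveRoot ζ r) (hr : (r : K) ≠ 0)
include hw hζ hr

theorem swap (b : Fin (n - 1))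
    (h : j (loFin b) = j (hiFin b) →
      α (loFin b) ≠ α (hiFin b) ∧ α (loFin b) ≠ α (hiFin b) + 1 ∧ α (hiFin b) ≠ α (loFin b) + 1) :
    IsWeight ρ ζ (swapWt b α) (swapWt b j) := by
  obtain ⟨w, hw₀, hw⟩ := hw
  by_cases hj : j (loFin b) = j (hiFin b)
  · obtain ⟨h₀, h₁, h₂⟩ := h hj
    rw [swapWt_of_eq b j hj]
    refine ⟨_, fun h0 => ?_, hw.intertwiner hζ hr b hj h₀⟩
    have hf : ρ (fD K r n b) w = (-(α (loFin b) - α (hiFin b))⁻¹) • w := by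
      rw [neg_smul]; exact eq_neg_of_add_eq_zero_left h0
    have hsq := sq_eq_one_of_mul_self_eq_one_of_apply_eq_smul
      (by rw [← map_mul, fD_mul_self, map_one]) hw₀ hf
    rw [neg_sq, inv_pow, inv_eq_one, sq_eq_one_iff, sub_eq_iff_eq_add, sub_eq_iff_eq_add] at hsq
    rcases hsq with h | h
    · exact h₁ (h.trans (add_comm _ _))
    · exact h₂ (by rw [h]; ring)
  · exact ⟨_, fun h0 => hw₀ (by rw [← fD_fD_apply ρ b w, h0, map_zero]), hw.fD_of_ne hζ hr b hj⟩

theorem ne_of_adjacent (hsplit : SplittableRep K r n ρ) (b : Fin (n - 1))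
    (hj : j (loFin b) = j (hiFin b)) : α (loFin b) ≠ α (hiFin b) := fun hα =>
  let ⟨_, hw₀, hw⟩ := hw
  hw₀ (hw.eq_zero_of_adjacent hζ hr b (hsplit _) hj hα)

theorem ne_of_aba (hsplit : SplittableRep K r n ρ) (h2 : (2 : K) ≠ 0) {b c : Fin (n - 1)}
    (hbc : c.1 = b.1 + 1) (hj₁ : j (loFin b) = j (hiFin b)) (hj₂ : j (hiFin b) = j (hiFin c)) :
    α (loFin b) ≠ α (hiFin c) := fun hα =>
  let ⟨_, hw₀, hw⟩ := hw
  hw₀ (hw.eq_zero_of_aba hζ hr b hsplit h2 hbc hj₁ hj₂ hα)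

theorem exists_of_swap_left {b : Fin (n - 1)} {k : Fin n} (hbk : hiFin b < k)
    (hadm : j (loFin b) = j (hiFin b) →
      α (loFin b) ≠ α (hiFin b) ∧ α (loFin b) ≠ α (hiFin b) + 1 ∧ α (hiFin b) ≠ α (loFin b) + 1)
    (hocc : OccursBetween ρ ζ s (hiFin b) k) (hj : j (loFin b) = j k) (hα : α (loFin b) = α k) :
    ∃ m, loFin b < m ∧ m < k ∧ j m = j (loFin b) ∧ α m = α (loFin b) + s := by
  have hk₁ : k ≠ loFin b := ((loFin_lt_hiFin b).trans hbk).ne'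
  obtain ⟨m, hbm, hmk, hjm, hαm⟩ := hocc _ _ (hw.swap hζ hr b hadm)
    (by rw [swapWt_hiFin, swapWt_of_ne b j hk₁ hbk.ne', hj])
    (by rw [swapWt_hiFin, swapWt_of_ne b α hk₁ hbk.ne', hα])
  have hm₁ : m ≠ loFin b := ((loFin_lt_hiFin b).trans hbm).ne'
  rw [swapWt_of_ne b j hm₁ hbm.ne', swapWt_hiFin] at hjm
  rw [swapWt_of_ne b α hm₁ hbm.ne', swapWt_hiFin] at hαm
  exact ⟨m, (loFin_lt_hiFin b).trans hbm, hmk, hjm, hαm⟩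

theorem exists_of_swap_right {c : Fin (n - 1)} {i : Fin n} (hic : i < loFin c)
    (hadm : j (loFin c) = j (hiFin c) →
      α (loFin c) ≠ α (hiFin c) ∧ α (loFin c) ≠ α (hiFin c) + 1 ∧ α (hiFin c) ≠ α (loFin c) + 1)
    (hocc : OccursBetween ρ ζ s i (loFin c)) (hj : j i = j (hiFin c)) (hα : α i = α (hiFin c)) :
    ∃ m, i < m ∧ m < hiFin c ∧ j m = j i ∧ α m = α i + s := by
  have hi₂ : i ≠ hiFin c := (hic.trans (loFin_lt_hiFin c)).ne
  obtain ⟨m, him, hmc, hjm, hαm⟩ := hocc _ _ (hw.swap hζ hr c hadm)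
    (by rw [swapWt_loFin, swapWt_of_ne c j hic.ne hi₂, hj])
    (by rw [swapWt_loFin, swapWt_of_ne c α hic.ne hi₂, hα])
  have hm₂ : m ≠ hiFin c := (hmc.trans (loFin_lt_hiFin c)).ne
  rw [swapWt_of_ne c j hmc.ne hm₂, swapWt_of_ne c j hic.ne hi₂] at hjm
  rw [swapWt_of_ne c α hmc.ne hm₂, swapWt_of_ne c α hic.ne hi₂] at hαm
  exact ⟨m, him, hmc.trans (loFin_lt_hiFin c), hjm, hαm⟩

variable (hs : s = 1 ∨ s = -1)
include hs

theorem eq_sub_at_hiFin_of_not_exists {b : Fin (n - 1)} {k : Fin n} (hbk : hiFin b < k)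
    (hocc : OccursBetween ρ ζ s (hiFin b) k) (hj : j (loFin b) = j k) (hα : α (loFin b) = α k)
    (hne : j (hiFin b) = j (loFin b) → α (hiFin b) ≠ α (loFin b))
    (hno : ¬∃ m, loFin b < m ∧ m < k ∧ j m = j (loFin b) ∧ α m = α (loFin b) + s) :
    j (hiFin b) = j (loFin b) ∧ α (hiFin b) = α (loFin b) - s := by
  by_contra hsub
  refine hno (hw.exists_of_swap_left hζ hr hbk (fun hjb => ?_) hocc hj hα)
  obtain ⟨h₁, h₂⟩ := ne_add_one_of_ne_add_of_ne_sub hs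
    (fun h => hno ⟨hiFin b, loFin_lt_hiFin b, hbk, hjb.symm, h⟩) fun h => hsub ⟨hjb.symm, h⟩
  exact ⟨(hne hjb.symm).symm, h₂, h₁⟩

theorem eq_sub_at_loFin_of_not_exists {c : Fin (n - 1)} {i : Fin n} (hic : i < loFin c)
    (hocc : OccursBetween ρ ζ s i (loFin c)) (hj : j i = j (hiFin c)) (hα : α i = α (hiFin c))
    (hne : j (loFin c) = j i → α (loFin c) ≠ α i)
    (hno : ¬∃ m, i < m ∧ m < hiFin c ∧ j m = j i ∧ α m = α i + s) :
    j (loFin c) = j i ∧ α (loFin c) = α i - s := by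
  by_contra hsub
  refine hno (hw.exists_of_swap_right hζ hr hic (fun hjc => ?_) hocc hj hα)
  have hjc' : j (loFin c) = j i := hjc.trans hj.symm
  rw [← hα]
  exact ⟨hne hjc', ne_add_one_of_ne_add_of_ne_sub hs
    (fun h => hno ⟨loFin c, hic, loFin_lt_hiFin c, hjc', h⟩) fun h => hsub ⟨hjc', h⟩⟩

end IsWeight

theorem occursBetween (hsplit : SplittableRep K r n ρ) (hζ : IsPrimitiveRoot ζ r)
    (hr : (r : K) ≠ 0) (h2 : (2 : K) ≠ 0) (hs : s = 1 ∨ s = -1) {i k : Fin n} (hik : i < k) :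
    OccursBetween ρ ζ s i k := by
  induction hd : k.1 - i.1 using Nat.strong_induction_on generalizing i k with
  | _ d ih =>
  have ih' : ∀ {i' k' : Fin n}, i' < k' → k'.1 - i'.1 < d → OccursBetween ρ ζ s i' k' :=
    fun h hlt => ih _ hlt h rfl
  intro α j hw hjk hαk
  by_contra hno
  have hcopy : ∀ m, i < m → m < k → j m = j i → α m ≠ α i := fun m him hmk hjm hαm =>
    let ⟨m', him', hm'm, hjm', hαm'⟩ := ih' him (by omega) α j hw hjm.symm hαm.symm
    hno ⟨m', him', hm'm.trans hmk, hjm', hαm'⟩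
  obtain ⟨b, rfl⟩ : ∃ b : Fin (n - 1), loFin b = i := ⟨⟨i, by omega⟩, rfl⟩
  have hbk : hiFin b < k := by
    refine lt_of_le_of_ne (Fin.le_def.mpr ?_) fun h => hw.ne_of_adjacent hζ hr hsplit b
      (h ▸ hjk) (h ▸ hαk)
    simp only [Fin.lt_def, val_loFin, val_hiFin] at hik ⊢; omega
  obtain ⟨c, rfl⟩ : ∃ c : Fin (n - 1), hiFin c = k :=
    ⟨⟨k - 1, by omega⟩, Fin.ext (by simp only [val_hiFin]; omega)⟩
  have hbc : hiFin b ≤ loFin c :=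
    Fin.le_def.mpr (by simp only [Fin.lt_def, val_loFin, val_hiFin] at hbk ⊢; omega)
  have hic : loFin b < loFin c := (loFin_lt_hiFin b).trans_le hbc
  have hleft := hw.eq_sub_at_hiFin_of_not_exists hζ hr hs hbk
    (ih' hbk (by simp only [Fin.lt_def, val_loFin, val_hiFin] at hd hbk ⊢; omega)) hjk hαk
    (hcopy _ (loFin_lt_hiFin b) hbk) hno
  have hright := hw.eq_sub_at_loFin_of_not_exists hζ hr hs hic
    (ih' hic (by simp only [Fin.lt_def, val_loFin, val_hiFin] at hd hic ⊢; omega)) hjk hαk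
    (hcopy _ hic (loFin_lt_hiFin c)) hno
  rcases hbc.eq_or_lt with heq | hlt
  · exact hw.ne_of_aba hζ hr hsplit h2 (congrArg Fin.val heq).symm hleft.1.symm
      (hleft.1.trans hjk) hαk
  · obtain ⟨m, hbm, hmc, hjm, hαm⟩ :=
      ih' hlt (by simp only [Fin.lt_def, val_loFin, val_hiFin] at hd hlt ⊢; omega)
      α j hw (hleft.1.trans hright.1.symm) (hleft.2.trans hright.2.symm)
    exact hcopy m ((loFin_lt_hiFin b).trans hbm) (hmc.trans (loFin_lt_hiFin c)) (hjm.trans hleft.1)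
      (by rw [hαm, hleft.2, sub_add_cancel])

end Weights

end DegYH

open DegYH in
theorem spec_weights_between_general
    (K : Type) [Field K] (p r n : ℕ) [CharP K p]
    (hp : 2 < p) (hpr : ¬ p ∣ r)
    (ζ : K) (hζ : IsPrimitiveRoot ζ r)
    (M : Type) [AddCommGroup M] [Module K M]
    (ρ : DYH K r n →ₐ[K] Module.End K M)
    (hsplit : SplittableRep K r n ρ)
    (α : Fin n → K) (j : Fin n → Fin r)
    (hwt : ∃ w : M, w ≠ 0 ∧ InWtD K r n ρ ζ α j w) :
    ∀ i k : Fin n, i < k → j i = j k → α i = α k →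
      (∃ m : Fin n, i < m ∧ m < k ∧ j m = j i ∧ α m = α i + 1) ∧
      (∃ m : Fin n, i < m ∧ m < k ∧ j m = j i ∧ α m = α i - 1) := by
  have hr : (r : K) ≠ 0 := fun h => hpr ((CharP.cast_eq_zero_iff K p r).mp h)
  have h2 : (2 : K) ≠ 0 := by
    have h := (CharP.cast_eq_zero_iff K p 2).not.mpr fun h => by
      have := Nat.le_of_dvd two_pos h; omega
    exact_mod_cast h
  intro i k hik hjk hαk
  refine ⟨occursBetween hsplit hζ hr h2 (Or.inl rfl) hik α j hwt hjk hαk, ?_⟩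
  simpa only [← sub_eq_add_neg] using
    occursBetween hsplit hζ hr h2 (Or.inr rfl) hik α j hwt hjk hαk

open DegYH in
/-- **Proposition 5.9**: let `𝕂` be algebraically closed of characteristic `p > 2`
with `p ∤ r` and let `(α, j) ∈ Spec_p(D_{r,n})`, i.e. a weight of some irreducible
completely splittable integral `D_{r,n}`-module. If `α_i = α_k` for some `i < k`
with `j_i = j_k`, then both `α_i + 1` and `α_i - 1` occur among the `α_m` with
`i < m < k` and `j_m = j_i`. -/
theorem spec_weights_between
    (K : Type) [Field K] [IsAlgClosed K] (p r n : ℕ) [CharP K p]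
    (hp : 2 < p) (hpr : ¬ p ∣ r) (hr : 0 < r) (hn : 0 < n)
    (ζ : K) (hζ : IsPrimitiveRoot ζ r)
    (M : Type) [AddCommGroup M] [Module K M] [FiniteDimensional K M]
    (ρ : DYH K r n →ₐ[K] Module.End K M)
    (hsimple : SimpleRepK K ρ) (hsplit : SplittableRep K r n ρ)
    (hint : IntegralRep K r n ρ)
    (α : Fin n → K) (j : Fin n → Fin r)
    (hwt : ∃ w : M, w ≠ 0 ∧ InWtD K r n ρ ζ α j w) :
    ∀ i k : Fin n, i < k → j i = j k → α i = α k →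
      (∃ m : Fin n, i < m ∧ m < k ∧ j m = j i ∧ α m = α i + 1) ∧
      (∃ m : Fin n, i < m ∧ m < k ∧ j m = j i ∧ α m = α i - 1) :=
  spec_weights_between_general K p r n hp hpr ζ hζ M ρ hsplit α j hwt
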